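/- Suppose n is even and p ≥ 1 satisfies p ≡ 0 (mod 2(n+1)). Then 1 − φ^p is the zero endomorphism of ℤ^n, and hence G_{n,p} = ℤ^n / Im(1 − φ^p) is isomorphic to ℤ^n. -/

import Mathlib

/-- The Coxeter transformation of the linearly oriented Dynkin quiver `A_n`, acting on
`ℤ^n = K_0(D^b(mod K A_n))` in the basis of classes of simple modules:
`φ(e_i) = e_{i+1}` for `1 ≤ i ≤ n-1` and `φ(e_n) = -(e_1 + ⋯ + e_n)`.
(Here the basis vector `e_i` is `Pi.single ⟨i-1, _⟩ 1`.) -/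
noncomputable def phiA (n : ℕ) : Module.End ℤ (Fin n → ℤ) :=
  (Pi.basisFun ℤ (Fin n)).constr ℤ (fun i =>
    if h : (i : ℕ) + 1 < n then Pi.single (⟨(i : ℕ) + 1, h⟩ : Fin n) 1 else fun _ => -1)
lemma phiA_single (n : ℕ) (i : Fin n) :
    phiA n (Pi.single i 1) =
      if h : (i : ℕ) + 1 < n then Pi.single (⟨(i : ℕ) + 1, h⟩ : Fin n) 1 else fun _ => -1 := by
  have := (Pi.basisFun ℤ (Fin n)).constr_basis ℤ (fun i =>
    if h : (i : ℕ) + 1 < n then Pi.single (⟨(i : ℕ) + 1, h⟩ : Fin n) 1 else fun _ => -1) i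
  simp [phiA, Pi.basisFun_apply] at this ⊢; exact this

lemma phiA_neg_one (m : ℕ) :
    phiA (m + 1) (fun _ => (-1 : ℤ)) = Pi.single (0 : Fin (m + 1)) 1 := by
  have hsum : (fun _ => (-1 : ℤ)) = -∑ i : Fin (m + 1), Pi.single i (1 : ℤ) := by
    rw [Finset.univ_sum_single]
    funext x; simp
  rw [hsum, map_neg, map_sum]
  have h1 : ∑ i : Fin (m + 1), phiA (m + 1) (Pi.single i 1)
      = (∑ i : Fin m, Pi.single (i.succ : Fin (m+1)) (1:ℤ)) + (fun _ => (-1:ℤ)) := by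
    rw [Fin.sum_univ_castSucc]
    congr 1
    · refine Finset.sum_congr rfl fun i _ => ?_
      rw [phiA_single]
      have h : ((i.castSucc : Fin (m+1)) : ℕ) + 1 < m + 1 := by
        simpa using i.isLt
      rw [dif_pos h]
      have he : (⟨((i.castSucc : Fin (m+1)) : ℕ) + 1, h⟩ : Fin (m+1)) = i.succ := by
        ext; simp
      rw [he]
    · rw [phiA_single]
      rw [dif_neg (by simp)]
  have h2 : (∑ i : Fin m, Pi.single (i.succ : Fin (m+1)) (1:ℤ))
      = (fun _ => (1:ℤ)) - Pi.single (0 : Fin (m+1)) 1 := by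
    have := Fin.sum_univ_succ (fun i : Fin (m+1) => Pi.single i (1:ℤ))
    rw [Finset.univ_sum_single] at this
    rw [eq_sub_iff_add_eq, this]
    exact add_comm _ _
  rw [h1, h2]
  funext j
  by_cases hj : j = 0 <;> simp [Pi.single_apply, hj]

lemma phiA_pow_single (n k : ℕ) (i : Fin n) (h : (i : ℕ) + k < n) :
    (phiA n ^ k) (Pi.single i 1) = Pi.single (⟨(i : ℕ) + k, h⟩ : Fin n) 1 := by
  induction k generalizing i with
  | zero =>
      simp only [pow_zero, Module.End.one_apply]
      have he : (⟨(i : ℕ) + 0, h⟩ : Fin n) = i := by ext; simp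
      rw [he]
  | succ k ih =>
      rw [pow_succ', Module.End.mul_apply, ih i (by omega), phiA_single,
        dif_pos (show ((⟨(i : ℕ) + k, by omega⟩ : Fin n) : ℕ) + 1 < n by simp; omega)]
      exact congrArg (fun j : Fin n => Pi.single j (1 : ℤ)) (Fin.ext (by simp; omega))

lemma phiA_pow_ord (m : ℕ) (i : Fin (m + 1)) :
    (phiA (m + 1) ^ (m + 2)) (Pi.single i 1) = Pi.single i 1 := by
  have hle : (i : ℕ) ≤ m := Nat.lt_succ_iff.mp i.isLt
  have hdecomp : m + 2 = ((i : ℕ) + 1) + (m + 1 - (i : ℕ)) := by omega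
  have hin : (phiA (m + 1) ^ (m + 1 - (i : ℕ))) (Pi.single i 1) = fun _ => (-1 : ℤ) := by
    have h1 : m + 1 - (i : ℕ) = (m - (i : ℕ)) + 1 := by omega
    rw [h1, pow_succ', Module.End.mul_apply,
      phiA_pow_single (m + 1) (m - (i : ℕ)) i (by omega),
      phiA_single, dif_neg (by simp; omega)]
  rw [hdecomp, pow_add, Module.End.mul_apply, hin, pow_succ, Module.End.mul_apply,
    phiA_neg_one, phiA_pow_single (m + 1) (i : ℕ) 0 (by simp; omega)]
  exact congrArg (fun j : Fin (m + 1) => Pi.single j (1 : ℤ)) (Fin.ext (by simp))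

lemma phiA_pow_eq_one (m : ℕ) : phiA (m + 1) ^ (m + 2) = 1 := by
  apply (Pi.basisFun ℤ (Fin (m + 1))).ext
  intro i
  simp only [Pi.basisFun_apply, Module.End.one_apply]
  simpa using phiA_pow_ord m i

theorem stmt10 (n p : ℕ) (hn : Even n) (hn1 : 1 ≤ n) (hp : 1 ≤ p)
    (hp0 : p ≡ 0 [MOD 2 * (n + 1)]) :
    (1 : Module.End ℤ (Fin n → ℤ)) - (phiA n) ^ p = 0 ∧
    Nonempty
      (((Fin n → ℤ) ⧸ LinearMap.range
          ((1 : Module.End ℤ (Fin n → ℤ)) - (phiA n) ^ p)) ≃+ (Fin n → ℤ)) := by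
  obtain ⟨m, rfl⟩ : ∃ m, n = m + 1 := ⟨n - 1, by omega⟩
  have hdvd : (m + 2) ∣ p := by
    have h2 : 2 * (m + 1 + 1) ∣ p := (Nat.modEq_zero_iff_dvd).mp hp0
    exact dvd_trans ⟨2, by ring⟩ h2
  obtain ⟨c, rfl⟩ := hdvd
  have hpow : phiA (m + 1) ^ ((m + 2) * c) = 1 := by
    rw [pow_mul, phiA_pow_eq_one, one_pow]
  have hzero : (1 : Module.End ℤ (Fin (m + 1) → ℤ)) - phiA (m + 1) ^ ((m + 2) * c) = 0 := by
    rw [hpow, sub_self]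
  refine ⟨hzero, ?_⟩
  rw [hzero, LinearMap.range_zero]
  exact ⟨(Submodule.quotEquivOfEqBot ⊥ rfl).toAddEquiv⟩
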